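/- Soundness and completeness of RmbC* with respect to truth-preserving BALFI semantics: for every set of formulas Γ ∪ {φ} over Σ, Γ ⊢_{RmbC*} φ if and only if Γ ⊨^g_BI φ. -/
import Mathlib


namespace LFI

/-- Formulas over the propositional signature Σ = {∧,∨,→,¬,∘}:
`neg` is the paraconsistent negation ¬ and `circ` the consistency operator ∘. -/
inductive Formula : Type
  | var : ℕ → Formula
  | and : Formula → Formula → Formula
  | or : Formula → Formula → Formula
  | imp : Formula → Formula → Formula
  | neg : Formula → Formula
  | circ : Formula → Formula

namespace Formula

/-- `α ↔ β` abbreviates `(α→β) ∧ (β→α)`. -/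
def iffF (a b : Formula) : Formula := and (imp a b) (imp b a)

/-- Conjunction `γ ∧ γ₁ ∧ … ∧ γₙ` of the nonempty list `γ :: l` (right-associated). -/
def conjL (γ : Formula) : List Formula → Formula
  | [] => γ
  | ψ :: l => and γ (conjL ψ l)

/-- `subst p α γ` is `γ[p/α]`: the result of replacing every occurrence of
the propositional variable `p` in `γ` by `α`. -/
def subst (p : ℕ) (α : Formula) : Formula → Formula
  | var q => if q = p then α else var q
  | and a b => and (subst p α a) (subst p α b)
  | or a b => or (subst p α a) (subst p α b)
  | imp a b => imp (subst p α a) (subst p α b)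
  | neg a => neg (subst p α a)
  | circ a => circ (subst p α a)

end Formula

open Formula

/-- Theoremhood for the Hilbert calculus `RmbC` (axioms Ax1–Ax10 of CPL⁺ plus (bc1),
modus ponens and the replacement rules (R¬), (R∘)) extended with an arbitrary set `Ax`
of extra axiom(-schema instance)s.  `Prf ∅` is theoremhood in RmbC itself. -/
inductive Prf (Ax : Set Formula) : Formula → Prop
  | ax1 (a b : Formula) : Prf Ax (imp a (imp b a))
  | ax2 (a b c : Formula) :
      Prf Ax (imp (imp a (imp b c)) (imp (imp a b) (imp a c)))
  | ax3 (a b : Formula) : Prf Ax (imp a (imp b (and a b)))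
  | ax4 (a b : Formula) : Prf Ax (imp (and a b) a)
  | ax5 (a b : Formula) : Prf Ax (imp (and a b) b)
  | ax6 (a b : Formula) : Prf Ax (imp a (or a b))
  | ax7 (a b : Formula) : Prf Ax (imp b (or a b))
  | ax8 (a b c : Formula) :
      Prf Ax (imp (imp a c) (imp (imp b c) (imp (or a b) c)))
  | ax9 (a b : Formula) : Prf Ax (or (imp a b) a)
  | ax10 (a : Formula) : Prf Ax (or a (neg a))
  | bc1 (a b : Formula) : Prf Ax (imp (circ a) (imp a (imp (neg a) b)))
  | ext {a : Formula} : a ∈ Ax → Prf Ax a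
  | mp {a b : Formula} : Prf Ax (imp a b) → Prf Ax a → Prf Ax b
  | rneg {a b : Formula} : Prf Ax (iffF a b) → Prf Ax (iffF (neg a) (neg b))
  | rcirc {a b : Formula} : Prf Ax (iffF a b) → Prf Ax (iffF (circ a) (circ b))

/-- Local derivation from premises: `Γ ⊢ φ` iff `φ` is a theorem, or there is a
finite nonempty subset `{γ, γ₁, …, γₙ} ⊆ Γ` with `⊢ (γ ∧ γ₁ ∧ … ∧ γₙ) → φ`. -/
def Deriv (Ax Γ : Set Formula) (φ : Formula) : Prop :=
  Prf Ax φ ∨ ∃ (γ : Formula) (l : List Formula),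
    γ ∈ Γ ∧ (∀ ψ ∈ l, ψ ∈ Γ) ∧ Prf Ax (imp (conjL γ l) φ)

/-- The conditions making unary operations `nB` (¬) and `cB` (∘) on a Boolean algebra
into LFI operators: `a ∨ ¬a = 1` and `a ∧ ¬a ∧ ∘a = 0`.  A BALFI is a Boolean algebra
equipped with two such operations. -/
def IsBALFI {A : Type*} [BooleanAlgebra A] (nB cB : A → A) : Prop :=
  (∀ a : A, a ⊔ nB a = ⊤) ∧ (∀ a : A, a ⊓ nB a ⊓ cB a = ⊥)

/-- The valuation (Σ-homomorphism) on a BALFI determined by the assignment `d` of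
values to propositional variables;  `→` is interpreted as Boolean implication `aᶜ ⊔ b`. -/
def eval {A : Type*} [BooleanAlgebra A] (nB cB : A → A) (d : ℕ → A) : Formula → A
  | .var n => d n
  | .and a b => eval nB cB d a ⊓ eval nB cB d b
  | .or a b => eval nB cB d a ⊔ eval nB cB d b
  | .imp a b => (eval nB cB d a)ᶜ ⊔ eval nB cB d b
  | .neg a => nB (eval nB cB d a)
  | .circ a => cB (eval nB cB d a)

/-- Global (truth-preserving) BALFI consequence: `Γ ⊨^g_BI φ` iff `v(φ) = ⊤` whenever
`v(γ) = ⊤` for all `γ ∈ Γ`, in every BALFI under every valuation. -/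
def GConseq (Γ : Set Formula) (φ : Formula) : Prop :=
  ∀ (A : Type) [BooleanAlgebra A], ∀ nB cB : A → A, IsBALFI nB cB →
    ∀ d : ℕ → A, (∀ γ ∈ Γ, eval nB cB d γ = ⊤) → eval nB cB d φ = ⊤

----------------------------------------------------------------
-- Hilbert toolkit
----------------------------------------------------------------
variable {Ax : Set Formula}

theorem Prf.idF (a : Formula) : Prf Ax (imp a a) :=
  .mp (.mp (.ax2 a (imp a a) a) (.ax1 a (imp a a))) (.ax1 a a)

theorem Prf.syl {a b c : Formula} (h1 : Prf Ax (imp a b)) (h2 : Prf Ax (imp b c)) :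
    Prf Ax (imp a c) :=
  .mp (.mp (.ax2 a b c) (.mp (.ax1 (imp b c) a) h2)) h1

theorem Prf.andI {a b : Formula} (h1 : Prf Ax a) (h2 : Prf Ax b) : Prf Ax (and a b) :=
  .mp (.mp (.ax3 a b) h1) h2
theorem Prf.andL {a b : Formula} (h : Prf Ax (and a b)) : Prf Ax a := .mp (.ax4 a b) h
theorem Prf.andR {a b : Formula} (h : Prf Ax (and a b)) : Prf Ax b := .mp (.ax5 a b) h

theorem Prf.iffI {a b : Formula} (h1 : Prf Ax (imp a b)) (h2 : Prf Ax (imp b a)) :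
    Prf Ax (iffF a b) := h1.andI h2
theorem Prf.iffL {a b : Formula} (h : Prf Ax (iffF a b)) : Prf Ax (imp a b) := h.andL
theorem Prf.iffR {a b : Formula} (h : Prf Ax (iffF a b)) : Prf Ax (imp b a) := h.andR

inductive PrfFrom (Ax : Set Formula) (H : Set Formula) : Formula → Prop
  | prf {a : Formula} : Prf Ax a → PrfFrom Ax H a
  | hyp {a : Formula} : a ∈ H → PrfFrom Ax H a
  | mp {a b : Formula} : PrfFrom Ax H (imp a b) → PrfFrom Ax H a → PrfFrom Ax H b

theorem PrfFrom.weaken {H H' : Set Formula} {a : Formula} (hs : H ⊆ H')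
    (h : PrfFrom Ax H a) : PrfFrom Ax H' a := by
  induction h with
  | prf h => exact .prf h
  | hyp h => exact .hyp (hs h)
  | mp _ _ ih1 ih2 => exact ih1.mp ih2

theorem PrfFrom.ded {H : Set Formula} {a b : Formula}
    (h : PrfFrom Ax (insert a H) b) : PrfFrom Ax H (imp a b) := by
  induction h with
  | prf h => exact .mp (.prf (.ax1 _ _)) (.prf h)
  | @hyp c hm =>
    rcases Set.mem_insert_iff.mp hm with rfl | hm
    · exact .prf (Prf.idF _)
    · exact .mp (.prf (.ax1 _ _)) (.hyp hm)
  | mp _ _ ih1 ih2 => exact .mp (.mp (.prf (.ax2 _ _ _)) ih1) ih2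

theorem PrfFrom.toPrf {a : Formula} (h : PrfFrom Ax ∅ a) : Prf Ax a := by
  induction h with
  | prf h => exact h
  | hyp h => exact absurd h (Set.notMem_empty _)
  | mp _ _ ih1 ih2 => exact ih1.mp ih2

theorem PrfFrom.orE {H : Set Formula} {a b c : Formula}
    (h : PrfFrom Ax H (or a b)) (h1 : PrfFrom Ax (insert a H) c)
    (h2 : PrfFrom Ax (insert b H) c) : PrfFrom Ax H c :=
  .mp (.mp (.mp (.prf (.ax8 a b c)) h1.ded) h2.ded) h

-- monotonicity lemmas
theorem Prf.andMono {a a' b b' : Formula} (h1 : Prf Ax (imp a a')) (h2 : Prf Ax (imp b b')) :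
    Prf Ax (imp (and a b) (and a' b')) := by
  refine PrfFrom.toPrf (PrfFrom.ded ?_)
  have h : PrfFrom Ax (insert (and a b) ∅) (and a b) := .hyp (Set.mem_insert _ _)
  exact .mp (.mp (.prf (.ax3 a' b')) (.mp (.prf h1) (.mp (.prf (.ax4 a b)) h)))
    (.mp (.prf h2) (.mp (.prf (.ax5 a b)) h))

theorem Prf.impAnd {a b c : Formula} (h1 : Prf Ax (imp a b)) (h2 : Prf Ax (imp a c)) :
    Prf Ax (imp a (and b c)) :=
  .mp (.mp (.ax2 a c (and b c)) (h1.syl (.ax3 b c))) h2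

theorem Prf.orMono {a a' b b' : Formula} (h1 : Prf Ax (imp a a')) (h2 : Prf Ax (imp b b')) :
    Prf Ax (imp (or a b) (or a' b')) :=
  .mp (.mp (.ax8 a b (or a' b')) (h1.syl (.ax6 a' b'))) (h2.syl (.ax7 a' b'))

theorem Prf.impMono {a a' b b' : Formula} (h1 : Prf Ax (imp a' a)) (h2 : Prf Ax (imp b b')) :
    Prf Ax (imp (imp a b) (imp a' b')) := by
  refine PrfFrom.toPrf (PrfFrom.ded (PrfFrom.ded ?_))
  have hab : PrfFrom Ax (insert a' (insert (imp a b) ∅)) (imp a b) := .hyp (Set.mem_insert_of_mem _ (Set.mem_insert _ _))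
  have ha' : PrfFrom Ax (insert a' (insert (imp a b) ∅)) a' := .hyp (Set.mem_insert _ _)
  exact .mp (.prf h2) (.mp hab (.mp (.prf h1) ha'))

theorem Prf.iffSymm {a b : Formula} (h : Prf Ax (iffF a b)) : Prf Ax (iffF b a) :=
  h.iffR.iffI h.iffL
theorem Prf.iffTrans {a b c : Formula} (h1 : Prf Ax (iffF a b)) (h2 : Prf Ax (iffF b c)) :
    Prf Ax (iffF a c) := (h1.iffL.syl h2.iffL).iffI (h2.iffR.syl h1.iffR)
theorem Prf.iffRefl (a : Formula) : Prf Ax (iffF a a) := (Prf.idF a).iffI (Prf.idF a)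

-- bottom and top
def botF : Formula := and (and (var 0) (neg (var 0))) (circ (var 0))
def topF : Formula := imp (var 0) (var 0)

theorem Prf.topI : Prf Ax topF := Prf.idF (var 0)
theorem Prf.toTop (a : Formula) : Prf Ax (imp a topF) := .mp (.ax1 topF a) Prf.topI

theorem Prf.exFalso (b : Formula) : Prf Ax (imp botF b) := by
  refine PrfFrom.toPrf (PrfFrom.ded ?_)
  have h : PrfFrom Ax (insert botF ∅) botF := .hyp (Set.mem_insert _ _)
  have hv : PrfFrom Ax (insert botF ∅) (var 0) := .mp (.prf (.ax4 _ _)) (.mp (.prf (.ax4 _ _)) h)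
  have hn : PrfFrom Ax (insert botF ∅) (neg (var 0)) := .mp (.prf (.ax5 _ _)) (.mp (.prf (.ax4 _ _)) h)
  have hc : PrfFrom Ax (insert botF ∅) (circ (var 0)) := .mp (.prf (.ax5 _ _)) h
  exact .mp (.mp (.mp (.prf (.bc1 (var 0) b)) hc) hv) hn

-- distributivity:  (x∨y)∧(x∨z) → x∨(y∧z)
theorem Prf.distrib (x y z : Formula) :
    Prf Ax (imp (and (or x y) (or x z)) (or x (and y z))) := by
  refine PrfFrom.toPrf (PrfFrom.ded ?_)
  set H0 : Set Formula := insert (and (or x y) (or x z)) ∅ with hH0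
  have h : PrfFrom Ax H0 (and (or x y) (or x z)) := .hyp (Set.mem_insert _ _)
  have hxy : PrfFrom Ax H0 (or x y) := .mp (.prf (.ax4 _ _)) h
  have hxz : PrfFrom Ax H0 (or x z) := .mp (.prf (.ax5 _ _)) h
  refine hxy.orE ?_ ?_
  · exact .mp (.prf (.ax6 x (and y z))) (.hyp (Set.mem_insert _ _))
  · refine (hxz.weaken (Set.subset_insert _ _)).orE ?_ ?_
    · exact .mp (.prf (.ax6 x (and y z))) (.hyp (Set.mem_insert _ _))
    · refine .mp (.prf (.ax7 x (and y z))) ?_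
      have hy : PrfFrom Ax (insert z (insert y H0)) y :=
        .hyp (Set.mem_insert_of_mem _ (Set.mem_insert _ _))
      have hz : PrfFrom Ax (insert z (insert y H0)) z := .hyp (Set.mem_insert _ _)
      exact .mp (.mp (.prf (.ax3 y z)) hy) hz

-- (a→b) ↔ ((a→⊥)∨b)
theorem Prf.impIffOr (a b : Formula) :
    Prf Ax (iffF (imp a b) (or (imp a botF) b)) := by
  refine Prf.iffI ?_ ?_
  · refine PrfFrom.toPrf (PrfFrom.ded ?_)
    set H0 : Set Formula := insert (imp a b) ∅ with hH0
    have h9 : PrfFrom Ax H0 (or (imp b botF) b) := .prf (.ax9 b botF)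
    refine h9.orE ?_ ?_
    · refine .mp (.prf (.ax6 (imp a botF) b)) ?_
      refine PrfFrom.ded ?_
      have hab : PrfFrom Ax (insert a (insert (imp b botF) H0)) (imp a b) :=
        .hyp (Set.mem_insert_of_mem _ (Set.mem_insert_of_mem _ (Set.mem_insert _ _)))
      have hb0 : PrfFrom Ax (insert a (insert (imp b botF) H0)) (imp b botF) :=
        .hyp (Set.mem_insert_of_mem _ (Set.mem_insert _ _))
      exact .mp hb0 (.mp hab (.hyp (Set.mem_insert _ _)))
    · exact .mp (.prf (.ax7 (imp a botF) b)) (.hyp (Set.mem_insert _ _))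
  · exact .mp (.mp (.ax8 (imp a botF) b (imp a b))
      ((Prf.idF a).impMono (Prf.exFalso b))) (.ax1 b a)

-- (a ∧ ¬a) ∧ ∘a ↔ ⊥
theorem Prf.incIffBot (a : Formula) :
    Prf Ax (iffF (and (and a (neg a)) (circ a)) botF) := by
  refine Prf.iffI ?_ (Prf.exFalso _)
  refine PrfFrom.toPrf (PrfFrom.ded ?_)
  have h : PrfFrom Ax (insert (and (and a (neg a)) (circ a)) ∅) (and (and a (neg a)) (circ a)) := .hyp (Set.mem_insert _ _)
  have ha : PrfFrom Ax (insert (and (and a (neg a)) (circ a)) ∅) a := .mp (.prf (.ax4 _ _)) (.mp (.prf (.ax4 _ _)) h)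
  have hn : PrfFrom Ax (insert (and (and a (neg a)) (circ a)) ∅) (neg a) := .mp (.prf (.ax5 _ _)) (.mp (.prf (.ax4 _ _)) h)
  have hc : PrfFrom Ax (insert (and (and a (neg a)) (circ a)) ∅) (circ a) := .mp (.prf (.ax5 _ _)) h
  exact .mp (.mp (.mp (.prf (.bc1 a botF)) hc) ha) hn

----------------------------------------------------------------
-- Lindenbaum–Tarski quotient
----------------------------------------------------------------

def ltSetoid (Ax : Set Formula) : Setoid Formula where
  r a b := Prf Ax (iffF a b)
  iseqv := ⟨Prf.iffRefl, Prf.iffSymm, Prf.iffTrans⟩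

def LT (Ax : Set Formula) := Quotient (ltSetoid Ax)

namespace LT

def mk (Ax : Set Formula) (a : Formula) : LT Ax := Quotient.mk (ltSetoid Ax) a

theorem sound {a b : Formula} (h : Prf Ax (iffF a b)) : mk Ax a = mk Ax b :=
  Quotient.sound h
theorem exact {a b : Formula} (h : mk Ax a = mk Ax b) : Prf Ax (iffF a b) :=
  Quotient.exact h

instance : LE (LT Ax) where
  le := Quotient.lift₂ (fun a b => Prf Ax (imp a b)) (by
    intro a b a' b' ha hb
    refine propext ⟨fun h => (ha.iffR.syl h).syl hb.iffL, fun h => (ha.iffL.syl h).syl hb.iffR⟩)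

theorem le_mk {a b : Formula} : (mk Ax a ≤ mk Ax b) = Prf Ax (imp a b) := rfl

instance : PartialOrder (LT Ax) where
  le_refl q := by induction q using Quotient.ind; exact Prf.idF _
  le_trans q1 q2 q3 := by
    induction q1 using Quotient.ind; induction q2 using Quotient.ind; induction q3 using Quotient.ind
    exact Prf.syl
  le_antisymm q1 q2 := by
    induction q1 using Quotient.ind; induction q2 using Quotient.ind
    exact fun h1 h2 => sound (h1.iffI h2)

instance : Lattice (LT Ax) where
  sup := Quotient.map₂ Formula.or (fun _ _ ha _ _ hb =>
    (ha.iffL.orMono hb.iffL).iffI (ha.iffR.orMono hb.iffR))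
  inf := Quotient.map₂ Formula.and (fun _ _ ha _ _ hb =>
    (ha.iffL.andMono hb.iffL).iffI (ha.iffR.andMono hb.iffR))
  le_sup_left q1 q2 := by
    induction q1 using Quotient.ind; induction q2 using Quotient.ind; exact .ax6 _ _
  le_sup_right q1 q2 := by
    induction q1 using Quotient.ind; induction q2 using Quotient.ind; exact .ax7 _ _
  sup_le q1 q2 q3 := by
    induction q1 using Quotient.ind; induction q2 using Quotient.ind; induction q3 using Quotient.ind
    exact fun h1 h2 => .mp (.mp (.ax8 _ _ _) h1) h2
  inf_le_left q1 q2 := by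
    induction q1 using Quotient.ind; induction q2 using Quotient.ind; exact .ax4 _ _
  inf_le_right q1 q2 := by
    induction q1 using Quotient.ind; induction q2 using Quotient.ind; exact .ax5 _ _
  le_inf q1 q2 q3 := by
    induction q1 using Quotient.ind; induction q2 using Quotient.ind; induction q3 using Quotient.ind
    exact Prf.impAnd

instance : DistribLattice (LT Ax) where
  le_sup_inf q1 q2 q3 := by
    induction q1 using Quotient.ind; induction q2 using Quotient.ind; induction q3 using Quotient.ind
    exact Prf.distrib _ _ _

instance : BooleanAlgebra (LT Ax) where
  top := mk Ax topF
  bot := mk Ax botF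
  compl := Quotient.map (fun a => imp a botF) (fun _ _ h =>
    (h.iffR.impMono (Prf.idF _)).iffI (h.iffL.impMono (Prf.idF _)))
  le_top q := by induction q using Quotient.ind; exact Prf.toTop _
  bot_le q := by induction q using Quotient.ind; exact Prf.exFalso _
  inf_compl_le_bot q := by
    induction q using Quotient.ind with | _ a =>
    refine PrfFrom.toPrf (PrfFrom.ded ?_)
    have h : PrfFrom Ax (insert (Formula.and a (imp a botF)) ∅) (Formula.and a (imp a botF)) :=
      .hyp (Set.mem_insert _ _)
    exact .mp (.mp (.prf (.ax5 _ _)) h) (.mp (.prf (.ax4 _ _)) h)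
  top_le_sup_compl q := by
    induction q using Quotient.ind with | _ a =>
    exact .mp (.ax1 _ topF)
      (.mp (.mp (.mp (.ax8 (imp a botF) a (Formula.or a (imp a botF)))
        (.ax7 a (imp a botF))) (.ax6 a (imp a botF))) (.ax9 a botF))

end LT

def LT.nQ (Ax : Set Formula) : LT Ax → LT Ax :=
  Quotient.map Formula.neg (fun _ _ h => Prf.rneg h)
def LT.cQ (Ax : Set Formula) : LT Ax → LT Ax :=
  Quotient.map Formula.circ (fun _ _ h => Prf.rcirc h)

theorem LT.isBALFI (Ax : Set Formula) : IsBALFI (LT.nQ Ax) (LT.cQ Ax) := by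
  constructor
  · intro q; induction q using Quotient.ind with | _ a =>
    exact LT.sound ((Prf.toTop _).iffI (.mp (.ax1 _ _) (.ax10 a)))
  · intro q; induction q using Quotient.ind with | _ a =>
    exact LT.sound (Prf.incIffBot a)

theorem LT.eval_mk (Ax : Set Formula) (φ : Formula) :
    eval (LT.nQ Ax) (LT.cQ Ax) (fun n => LT.mk Ax (var n)) φ = LT.mk Ax φ := by
  induction φ with
  | var n => rfl
  | and a b iha ihb => show _ ⊓ _ = _; rw [iha, ihb]; rfl
  | or a b iha ihb => show _ ⊔ _ = _; rw [iha, ihb]; rfl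
  | imp a b iha ihb =>
    show _ᶜ ⊔ _ = _
    rw [iha, ihb]
    exact LT.sound (Prf.impIffOr a b).iffSymm
  | neg a iha => show LT.nQ Ax _ = _; rw [iha]; rfl
  | circ a iha => show LT.cQ Ax _ = _; rw [iha]; rfl

-- Boolean algebra tautology lemmas for soundness
section BA
variable {A : Type} [BooleanAlgebra A]

theorem ba_imp (x y : A) : xᶜ ⊔ y = x ⇨ y := by rw [himp_eq, sup_comm]

theorem ba1 (x y : A) : xᶜ ⊔ (yᶜ ⊔ x) = ⊤ := by
  rw [ba_imp, ba_imp, himp_eq_top_iff, le_himp_iff]; exact inf_le_left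

theorem ba2 (x y z : A) : (xᶜ ⊔ (yᶜ ⊔ z))ᶜ ⊔ ((xᶜ ⊔ y)ᶜ ⊔ (xᶜ ⊔ z)) = ⊤ := by
  simp only [ba_imp]
  rw [himp_eq_top_iff, le_himp_iff, le_himp_iff]
  calc (x ⇨ (y ⇨ z)) ⊓ (x ⇨ y) ⊓ x ≤ (y ⇨ z) ⊓ y := by
        refine le_inf ?_ ?_
        · exact le_trans (inf_le_inf_right x (inf_le_left (b := x ⇨ y)))
            (himp_inf_le (a := x) (b := y ⇨ z))
        · exact le_trans (inf_le_inf_right x (inf_le_right (a := x ⇨ (y ⇨ z))))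
            (himp_inf_le (a := x) (b := y))
    _ ≤ z := himp_inf_le

theorem ba3 (x y : A) : xᶜ ⊔ (yᶜ ⊔ (x ⊓ y)) = ⊤ := by
  simp only [ba_imp]; rw [himp_eq_top_iff, le_himp_iff]

theorem ba4 (x y : A) : (x ⊓ y)ᶜ ⊔ x = ⊤ := by
  rw [ba_imp, himp_eq_top_iff]; exact inf_le_left

theorem ba5 (x y : A) : (x ⊓ y)ᶜ ⊔ y = ⊤ := by
  rw [ba_imp, himp_eq_top_iff]; exact inf_le_right

theorem ba6 (x y : A) : xᶜ ⊔ (x ⊔ y) = ⊤ := by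
  rw [ba_imp, himp_eq_top_iff]; exact le_sup_left

theorem ba7 (x y : A) : yᶜ ⊔ (x ⊔ y) = ⊤ := by
  rw [ba_imp, himp_eq_top_iff]; exact le_sup_right

theorem ba8 (x y z : A) : (xᶜ ⊔ z)ᶜ ⊔ ((yᶜ ⊔ z)ᶜ ⊔ ((x ⊔ y)ᶜ ⊔ z)) = ⊤ := by
  simp only [ba_imp]
  rw [himp_eq_top_iff, le_himp_iff, le_himp_iff]
  rw [inf_sup_left]
  refine sup_le ?_ ?_
  · exact le_trans (inf_le_inf_right x (inf_le_left (b := y ⇨ z)))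
      (himp_inf_le (a := x) (b := z))
  · exact le_trans (inf_le_inf_right y (inf_le_right (a := x ⇨ z)))
      (himp_inf_le (a := y) (b := z))

theorem ba9 (x y : A) : (xᶜ ⊔ y) ⊔ x = ⊤ := by
  rw [sup_comm, ← sup_assoc, sup_compl_eq_top, top_sup_eq]

theorem ba_bc1 (x n c y : A) (h : x ⊓ n ⊓ c = ⊥) :
    cᶜ ⊔ (xᶜ ⊔ (nᶜ ⊔ y)) = ⊤ := by
  simp only [ba_imp]
  rw [himp_eq_top_iff, le_himp_iff, le_himp_iff]
  have hcxn : c ⊓ x ⊓ n = ⊥ := by rw [← h]; ac_rfl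
  rw [hcxn]; exact bot_le

theorem ba_mp (x y : A) (h1 : xᶜ ⊔ y = ⊤) (h2 : x = ⊤) : y = ⊤ := by
  rw [h2, compl_top, bot_sup_eq] at h1; exact h1

theorem ba_iff_eq (x y : A) (h : (xᶜ ⊔ y) ⊓ (yᶜ ⊔ x) = ⊤) : x = y := by
  rcases inf_eq_top_iff.mp h with ⟨h1, h2⟩
  rw [ba_imp] at h1 h2
  exact le_antisymm (himp_eq_top_iff.mp h1) (himp_eq_top_iff.mp h2)
end BA

theorem rmbc_sound {Γ : Set Formula} {φ : Formula} (h : Prf Γ φ) : GConseq Γ φ := by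
  intro A _ nB cB hB d hΓ
  induction h with
  | ax1 a b => exact ba1 _ _
  | ax2 a b c => exact ba2 _ _ _
  | ax3 a b => exact ba3 _ _
  | ax4 a b => exact ba4 _ _
  | ax5 a b => exact ba5 _ _
  | ax6 a b => exact ba6 _ _
  | ax7 a b => exact ba7 _ _
  | ax8 a b c => exact ba8 _ _ _
  | ax9 a b => exact ba9 _ _
  | ax10 a => exact hB.1 _
  | bc1 a b => exact ba_bc1 _ _ _ _ (hB.2 (eval nB cB d a))
  | ext hm => exact hΓ _ hm
  | mp _ _ ih1 ih2 => exact ba_mp _ _ ih1 ih2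
  | @rneg a b _ ih =>
    simp only [Formula.iffF, eval] at ih ⊢
    have he : eval nB cB d a = eval nB cB d b := ba_iff_eq _ _ ih
    rw [he]
    simp [compl_sup_eq_top]
  | @rcirc a b _ ih =>
    simp only [Formula.iffF, eval] at ih ⊢
    have he : eval nB cB d a = eval nB cB d b := ba_iff_eq _ _ ih
    rw [he]
    simp [compl_sup_eq_top]

theorem rmbc_complete {Γ : Set Formula} {φ : Formula} (h : GConseq Γ φ) : Prf Γ φ := by
  have hv := h (LT Γ) (LT.nQ Γ) (LT.cQ Γ) (LT.isBALFI Γ) (fun n => LT.mk Γ (var n)) ?_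
  · rw [LT.eval_mk] at hv
    have h2 : Prf Γ (iffF φ topF) := LT.exact hv
    exact .mp h2.iffR Prf.topI
  · intro γ hγ
    rw [LT.eval_mk]
    exact LT.sound ((Prf.toTop γ).iffI (.mp (.ax1 _ _) (.ext hγ)))


/-- Theorem 7.4: soundness and completeness of RmbC* (global
derivations: premises in `Γ` are usable as lines and all rules apply freely, which is
exactly `Prf Γ`) w.r.t. truth-preserving BALFI semantics: `Γ ⊢_{RmbC*} φ` iff `Γ ⊨^g_BI φ`. -/
theorem rmbcstar_sound_complete (Γ : Set Formula) (φ : Formula) :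
    Prf Γ φ ↔ GConseq Γ φ := ⟨rmbc_sound, rmbc_complete⟩

end LFI
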